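/- arXiv:1908.01524 — 4 statements merged into one kernel-verified Lean document; each statement's English description precedes it below -/
import Mathlib

section
/- In an edge-positively-weighted cycle C with vertices v_1,...,v_m (m ≥ 4) realizing a metric d on its vertex set, if d(v_{i-1},v_i) + d(v_i,v_{i+1}) > d(v_{i-1},v_{i+1}) for some index i (indices mod m), then for every vertex v not in {v_{i-1}, v_i, v_{i+1}}, v is not slack, i.e., d of its two neighbors along the cycle equals the sum of the two adjacent distances. -/
/-- Sum of the weights along the arc of the cycle from `i` to `j`, going in the
direction of increasing indices; `w k` is the weight of the edge `{v_k, v_{k+1}}`. -/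
noncomputable def arcSum (m : ℕ) (w : ZMod m → ℝ) (i j : ZMod m) : ℝ :=
  ∑ k ∈ Finset.range ((j - i).val), w (i + (k : ZMod m))

/-- The shortest-path distance between vertices `i` and `j` of the positively
weighted cycle on `ZMod m`: the smaller of the two arc lengths. -/
noncomputable def cycleDist (m : ℕ) (w : ZMod m → ℝ) (i j : ZMod m) : ℝ :=
  min (arcSum m w i j) (arcSum m w j i)

lemma arcSum_add_arcSum (m : ℕ) [NeZero m] (w : ZMod m → ℝ) (i j : ZMod m)
    (hij : i ≠ j) : arcSum m w i j + arcSum m w j i = ∑ x, w x := by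
  have h1 : (j - i) ≠ 0 := sub_ne_zero.mpr (Ne.symm hij)
  have hval : (j - i).val + (i - j).val = m := by
    have he : (i - j) = -(j - i) := by ring
    rw [he, ZMod.neg_val]
    simp only [h1, if_false]
    have h2 := ZMod.val_lt (j - i)
    have h3 : 0 < (j - i).val := Nat.pos_of_ne_zero (fun h => h1 ((ZMod.val_eq_zero _).mp h))
    omega
  have hshift : ∀ k : ℕ, j + (k : ZMod m) = i + (((j - i).val + k : ℕ) : ZMod m) := by
    intro k
    push_cast
    rw [ZMod.natCast_val, ZMod.cast_id]
    ring
  have hsum2 : arcSum m w j i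
      = ∑ k ∈ Finset.range ((i - j).val), w (i + (((j - i).val + k : ℕ) : ZMod m)) :=
    Finset.sum_congr rfl (fun k _ => by rw [← hshift k])
  rw [arcSum, hsum2, ← Finset.sum_range_add, hval]
  refine Finset.sum_nbij' (fun k => i + (k : ZMod m)) (fun x => (x - i).val)
    (fun a _ => Finset.mem_univ _) (fun a _ => Finset.mem_range.mpr (ZMod.val_lt _))
    (fun a ha => ?_) (fun a _ => ?_) (fun a _ => rfl)
  · show ((i + (a : ZMod m)) - i).val = a
    have h : (i + (a : ZMod m) - i) = (a : ZMod m) := by ring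
    rw [h, ZMod.val_cast_of_lt (Finset.mem_range.mp ha)]
  · show i + ((((a - i).val : ℕ)) : ZMod m) = a
    rw [ZMod.natCast_val, ZMod.cast_id]; ring

lemma arcSum_one (m : ℕ) (hm : 1 < m) (w : ZMod m → ℝ) (j : ZMod m) :
    arcSum m w j (j + 1) = w j := by
  have h1 : ((j + 1) - j : ZMod m) = ((1 : ℕ) : ZMod m) := by push_cast; ring
  rw [arcSum, h1, ZMod.val_cast_of_lt hm]
  simp

lemma arcSum_two (m : ℕ) (hm : 2 < m) (w : ZMod m → ℝ) (j : ZMod m) :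
    arcSum m w (j - 1) (j + 1) = w (j - 1) + w j := by
  have h1 : ((j + 1) - (j - 1) : ZMod m) = ((2 : ℕ) : ZMod m) := by push_cast; ring
  rw [arcSum, h1, ZMod.val_cast_of_lt hm]
  rw [Finset.sum_range_succ, Finset.sum_range_one]
  norm_num

lemma slack_key (a b T : ℝ) (ha : 0 < a) (hb : 0 < b)
    (h : min (a + b) (T - (a + b)) < min a (T - a) + min b (T - b)) :
    T < 2 * (a + b) := by
  by_contra hc
  push_neg at hc
  rw [min_eq_left (by linarith), min_eq_left (by linarith), min_eq_left (by linarith)] at h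
  linarith

/-- If a positively weighted cycle on `m ≥ 4` vertices realizes the metric `d` and
`v_i` is slack, then no vertex outside `{v_{i-1}, v_i, v_{i+1}}` is slack. -/
theorem stmt_0 (m : ℕ) (hm : 4 ≤ m) (w : ZMod m → ℝ) (hw : ∀ e, 0 < w e)
    (d : ZMod m → ZMod m → ℝ) (hd : ∀ i j, d i j = cycleDist m w i j)
    (i : ZMod m) (hslack : d (i - 1) (i + 1) < d (i - 1) i + d i (i + 1)) :
    ∀ v : ZMod m, v ≠ i - 1 → v ≠ i → v ≠ i + 1 →
      d (v - 1) v + d v (v + 1) = d (v - 1) (v + 1) := by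
  intro v hv1 hv2 hv3
  haveI : NeZero m := ⟨by omega⟩
  set T := ∑ x, w x with hT
  have hone : ((1 : ℕ) : ZMod m) ≠ 0 := by
    intro h
    have := ZMod.val_cast_of_lt (show 1 < m by omega)
    rw [h] at this
    simp at this
  have htwo : ((2 : ℕ) : ZMod m) ≠ 0 := by
    intro h
    have := ZMod.val_cast_of_lt (show 2 < m by omega)
    rw [h] at this
    simp at this
  have hne1 : ∀ j : ZMod m, j - 1 ≠ j := by
    intro j h
    apply hone
    have h2 : (j : ZMod m) - 1 - j = -((1:ℕ) : ZMod m) := by push_cast; ring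
    rw [h] at h2
    simpa using h2.symm
  have hne1' : ∀ j : ZMod m, j ≠ j + 1 := by
    intro j
    have := hne1 (j + 1)
    rwa [add_sub_cancel_right] at this
  have hne2 : ∀ j : ZMod m, j - 1 ≠ j + 1 := by
    intro j h
    apply htwo
    have h2 : (j + 1 : ZMod m) - (j - 1) = ((2:ℕ) : ZMod m) := by push_cast; ring
    rw [← h] at h2
    simpa using h2.symm
  have harc1 : ∀ j : ZMod m, arcSum m w (j - 1) j = w (j - 1) := by
    intro j
    have := arcSum_one m (by omega) w (j - 1)
    rwa [sub_add_cancel] at this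
  have harcT : ∀ x y : ZMod m, x ≠ y → arcSum m w y x = T - arcSum m w x y := by
    intro x y hxy
    have := arcSum_add_arcSum m w x y hxy
    linarith
  have hdadj : ∀ j : ZMod m, d (j - 1) j = min (w (j - 1)) (T - w (j - 1)) := by
    intro j
    rw [hd, cycleDist, harc1 j, harcT _ _ (hne1 j), harc1 j]
  have hdadj' : ∀ j : ZMod m, d j (j + 1) = min (w j) (T - w j) := by
    intro j
    rw [hd, cycleDist, arcSum_one m (by omega) w j, harcT _ _ (hne1' j),
      arcSum_one m (by omega) w j]
  have hdtwo : ∀ j : ZMod m, d (j - 1) (j + 1)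
      = min (w (j - 1) + w j) (T - (w (j - 1) + w j)) := by
    intro j
    rw [hd, cycleDist, arcSum_two m (by omega) w j, harcT _ _ (hne2 j),
      arcSum_two m (by omega) w j]
  rw [hdadj i, hdadj' i, hdtwo i] at hslack
  have hkey : T < 2 * (w (i - 1) + w i) :=
    slack_key _ _ _ (hw _) (hw _) hslack
  have d1 : i - 1 ≠ i := hne1 i
  have d2 : i - 1 ≠ v - 1 := fun h => hv2 (sub_left_injective h).symm
  have d3 : i - 1 ≠ v := fun h => hv1 h.symm
  have d4 : i ≠ v - 1 := fun h => hv3 (by rw [h, sub_add_cancel])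
  have d5 : i ≠ v := fun h => hv2 h.symm
  have d6 : v - 1 ≠ v := hne1 v
  have hsum4 : w (i - 1) + w i + (w (v - 1) + w v) ≤ T := by
    have hle := Finset.sum_le_sum_of_subset_of_nonneg
      (Finset.subset_univ ({i - 1, i, v - 1, v} : Finset (ZMod m)))
      (fun x _ _ => (hw x).le)
    rw [Finset.sum_insert (by simp [d1, d2, d3]), Finset.sum_insert (by simp [d4, d5]),
      Finset.sum_pair d6] at hle
    linarith
  have hc := hw (v - 1)
  have he := hw v
  have hce : 2 * (w (v - 1) + w v) < T := by linarith
  rw [hdadj v, hdadj' v, hdtwo v,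
    min_eq_left (by linarith), min_eq_left (by linarith), min_eq_left (by linarith)]
end

section
/- In an edge-positively-weighted cycle C on m ≥ 4 vertices realizing a metric d on its vertex set, there are at most two slack vertices, and if there are exactly two slack vertices then they are adjacent in C. -/
lemma arc_total (m : ℕ) [NeZero m] (hm : 4 ≤ m) (w : ZMod m → ℝ) {i j : ZMod m} (hij : i ≠ j) :
    arcSum m w i j + arcSum m w j i = ∑ e, w e := by
  have hne : j - i ≠ 0 := sub_ne_zero.mpr (Ne.symm hij)
  set t := (j - i).val with ht
  set s := (i - j).val with hs
  have hval : t + s = m := by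
    have h1 : i - j = -(j - i) := by ring
    rw [hs, h1, ZMod.neg_val, if_neg hne]
    have h2 := ZMod.val_lt (j - i)
    have hpos : 0 < t := Nat.pos_of_ne_zero (fun h => hne ((ZMod.val_eq_zero _).mp h))
    omega
  have key : arcSum m w j i = ∑ k ∈ Finset.range s, w (i + ((t + k : ℕ) : ZMod m)) := by
    unfold arcSum
    refine Finset.sum_congr rfl fun k _ => ?_
    congr 1
    push_cast
    rw [ht, ZMod.natCast_zmod_val]
    ring
  rw [key]
  unfold arcSum
  rw [← Finset.sum_range_add (fun k : ℕ => w (i + (k : ZMod m))) t s, hval]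
  refine Finset.sum_nbij' (fun k => i + (k : ZMod m)) (fun e => (e - i).val) ?_ ?_ ?_ ?_ ?_
  · intro k _; exact Finset.mem_univ _
  · intro e _; exact Finset.mem_range.mpr (ZMod.val_lt _)
  · intro k hk
    rw [add_sub_cancel_left, ZMod.val_cast_of_lt (Finset.mem_range.mp hk)]
  · intro e _
    rw [ZMod.natCast_zmod_val]; ring
  · intro k _; rfl

lemma arc_one (m : ℕ) [NeZero m] (hm : 4 ≤ m) (w : ZMod m → ℝ) (i : ZMod m) :
    arcSum m w i (i + 1) = w i := by
  unfold arcSum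
  rw [add_sub_cancel_left]
  have h1 : (1 : ZMod m).val = 1 := by rw [ZMod.val_one_eq_one_mod]; exact Nat.mod_eq_of_lt (by omega)
  rw [h1, Finset.sum_range_one]
  norm_num

lemma arc_two (m : ℕ) [NeZero m] (hm : 4 ≤ m) (w : ZMod m → ℝ) (i : ZMod m) :
    arcSum m w (i - 1) (i + 1) = w (i - 1) + w i := by
  unfold arcSum
  have h0 : i + 1 - (i - 1) = (2 : ZMod m) := by ring
  have h1 : ((2 : ZMod m)).val = 2 := by
    have : ((2 : ℕ) : ZMod m) = (2 : ZMod m) := by norm_num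
    rw [← this, ZMod.val_cast_of_lt (by omega)]
  rw [h0, h1, Finset.sum_range_succ, Finset.sum_range_one]
  norm_num

lemma zmod_cast_ne_zero (m : ℕ) [NeZero m] (k : ℕ) (h0 : 0 < k) (h1 : k < m) :
    ((k : ℕ) : ZMod m) ≠ 0 := by
  intro h
  have := (ZMod.natCast_eq_zero_iff k m).mp h
  have := Nat.le_of_dvd h0 this
  omega

lemma slack_gt (m : ℕ) [NeZero m] (hm : 4 ≤ m) (w : ZMod m → ℝ) (hw : ∀ e, 0 < w e)
    (d : ZMod m → ZMod m → ℝ) (hd : ∀ i j, d i j = cycleDist m w i j) (i : ZMod m)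
    (h : d (i - 1) (i + 1) < d (i - 1) i + d i (i + 1)) :
    ∑ e, w e < 2 * (w (i - 1) + w i) := by
  set W := ∑ e, w e with hW
  have h1 : (1 : ZMod m) ≠ 0 := by
    have := zmod_cast_ne_zero m 1 (by omega) (by omega); simpa using this
  have h2 : (2 : ZMod m) ≠ 0 := by
    have := zmod_cast_ne_zero m 2 (by omega) (by omega); simpa using this
  have hne1 : i - 1 ≠ i := fun he => h1 (sub_eq_self.mp he)
  have hne2 : i ≠ i + 1 := fun he => h1 (by linear_combination -he)
  have hne3 : i - 1 ≠ i + 1 := fun he => h2 (by linear_combination -he)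
  have A1 : arcSum m w (i - 1) i = w (i - 1) := by
    have := arc_one m hm w (i - 1); rwa [sub_add_cancel] at this
  have A2 : arcSum m w i (i + 1) = w i := arc_one m hm w i
  have A3 : arcSum m w (i - 1) (i + 1) = w (i - 1) + w i := arc_two m hm w i
  have B1 : arcSum m w i (i - 1) = W - w (i - 1) := by
    have := arc_total m hm w hne1; rw [A1] at this; linarith
  have B2 : arcSum m w (i + 1) i = W - w i := by
    have := arc_total m hm w hne2; rw [A2] at this; linarith
  have B3 : arcSum m w (i + 1) (i - 1) = W - (w (i - 1) + w i) := by
    have := arc_total m hm w hne3; rw [A3] at this; linarith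
  rw [hd, hd, hd] at h
  unfold cycleDist at h
  rw [A1, A2, A3, B1, B2, B3] at h
  by_contra hc
  push_neg at hc
  have p1 : 0 < w (i - 1) := hw _
  have p2 : 0 < w i := hw _
  rw [min_eq_left (by linarith), min_eq_left (by linarith), min_eq_left (by linarith)] at h
  linarith

lemma slack_adj (m : ℕ) [NeZero m] (hm : 4 ≤ m) (w : ZMod m → ℝ) (hw : ∀ e, 0 < w e)
    (d : ZMod m → ZMod m → ℝ) (hd : ∀ i j, d i j = cycleDist m w i j) (i j : ZMod m)
    (hi : d (i - 1) (i + 1) < d (i - 1) i + d i (i + 1))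
    (hj : d (j - 1) (j + 1) < d (j - 1) j + d j (j + 1)) (hne : i ≠ j) :
    j = i + 1 ∨ j = i - 1 := by
  by_contra hc
  push_neg at hc
  obtain ⟨hc1, hc2⟩ := hc
  have h1 : (1 : ZMod m) ≠ 0 := by
    have := zmod_cast_ne_zero m 1 (by omega) (by omega); simpa using this
  have d1 : i - 1 ≠ i := fun he => h1 (sub_eq_self.mp he)
  have d2 : j - 1 ≠ j := fun he => h1 (sub_eq_self.mp he)
  have d3 : i - 1 ≠ j - 1 := fun he => hne (by linear_combination he)
  have d4 : i - 1 ≠ j := fun he => hc2 he.symm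
  have d5 : i ≠ j - 1 := fun he => hc1 (by linear_combination -he)
  have hWi := slack_gt m hm w hw d hd i hi
  have hWj := slack_gt m hm w hw d hd j hj
  have hsub : ∑ e ∈ ({i - 1, i, j - 1, j} : Finset (ZMod m)), w e ≤ ∑ e, w e :=
    Finset.sum_le_sum_of_subset_of_nonneg (Finset.subset_univ _) (fun e _ _ => (hw e).le)
  have hs : ∑ e ∈ ({i - 1, i, j - 1, j} : Finset (ZMod m)), w e
      = w (i - 1) + w i + w (j - 1) + w j := by
    rw [Finset.sum_insert (by simp [d1, d3, d4]),
        Finset.sum_insert (by simp [d5, hne]),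
        Finset.sum_insert (by simp [d2]), Finset.sum_singleton]
    ring
  rw [hs] at hsub
  linarith

/-- A positively weighted cycle on `m ≥ 4` vertices realizing a metric `d` has at
most two slack vertices, and any two distinct slack vertices are adjacent. -/
theorem stmt_1 (m : ℕ) (hm : 4 ≤ m) (w : ZMod m → ℝ) (hw : ∀ e, 0 < w e)
    (d : ZMod m → ZMod m → ℝ) (hd : ∀ i j, d i j = cycleDist m w i j) :
    {i : ZMod m | d (i - 1) (i + 1) < d (i - 1) i + d i (i + 1)}.ncard ≤ 2 ∧
    ∀ i j : ZMod m, d (i - 1) (i + 1) < d (i - 1) i + d i (i + 1) →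
      d (j - 1) (j + 1) < d (j - 1) j + d j (j + 1) → i ≠ j →
        j = i + 1 ∨ j = i - 1 := by
  haveI : NeZero m := ⟨by omega⟩
  have h1 : (1 : ZMod m) ≠ 0 := by
    have := zmod_cast_ne_zero m 1 (by omega) (by omega); simpa using this
  have h3 : (3 : ZMod m) ≠ 0 := by
    have := zmod_cast_ne_zero m 3 (by omega) (by omega)
    intro he; apply this; push_cast; exact he
  refine ⟨?_, fun i j hi hj hne => slack_adj m hm w hw d hd i j hi hj hne⟩
  by_contra hc
  push_neg at hc
  obtain ⟨a, ha, b, hb, c, hcc, hab, hac, hbc⟩ :=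
    (Set.two_lt_ncard (Set.toFinite _)).mp hc
  simp only [Set.mem_setOf_eq] at ha hb hcc
  have Hab := slack_adj m hm w hw d hd a b ha hb hab
  have Hac := slack_adj m hm w hw d hd a c ha hcc hac
  have Hbc := slack_adj m hm w hw d hd b c hb hcc hbc
  rcases Hab with hb1 | hb1 <;> rcases Hac with hc1 | hc1 <;>
    rcases Hbc with hd1 | hd1 <;>
      first
      | exact hbc (hb1.trans hc1.symm)
      | exact h1 (by linear_combination hc1 - hd1 - hb1)
      | exact h1 (by linear_combination hb1 + hd1 - hc1)
      | exact h3 (by linear_combination hc1 - hd1 - hb1)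
      | exact h3 (by linear_combination hb1 + hd1 - hc1)
end

section
/- Let G be a finite connected simple graph with positive edge weights that realizes a metric d on X ⊆ V(G), and suppose G contains a cycle C = v_1,...,v_m (m ≥ 4) whose edges each lie on no other cycle, with a slack vertex v_i (i.e., d_G(v_{i-1},v_i) + d_G(v_i,v_{i+1}) > d_G(v_{i-1},v_{i+1})). Define G' by adding a new vertex v', deleting edges {v_{i-1},v_i} and {v_i,v_{i+1}}, and adding edges {v_{i-1},v'}, {v_i,v'}, {v_{i+1},v'} with weights Δ_{i-1}, Δ_i, Δ_{i+1} respectively (where Δ_j is half the corresponding triangle excess of d_G on {v_{i-1},v_i,v_{i+1}}). Then the shortest-path metric of G' agrees with that of G on V(G); in particular G' also realizes (X, d). -/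
/-- The shortest-path "distance" between `u` and `v` in the graph `G` with edge
weights `w`: the infimum of the total weights of walks from `u` to `v`. -/
noncomputable def wDist {V : Type*} (G : SimpleGraph V) (w : Sym2 V → ℝ) (u v : V) : ℝ :=
  sInf {x : ℝ | ∃ p : G.Walk u v, x = (p.edges.map w).sum}

section helpers
variable {V : Type*} {G : SimpleGraph V} {w : Sym2 V → ℝ}

lemma wSum_nonneg (hw : ∀ e ∈ G.edgeSet, 0 ≤ w e) {u v : V} (p : G.Walk u v) :
    0 ≤ (p.edges.map w).sum := by
  apply List.sum_nonneg
  intro y hy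
  obtain ⟨e, he, rfl⟩ := List.mem_map.1 hy
  exact hw e (p.edges_subset_edgeSet he)

lemma wDist_bddBelow (hw : ∀ e ∈ G.edgeSet, 0 ≤ w e) (u v : V) :
    BddBelow {x : ℝ | ∃ p : G.Walk u v, x = (p.edges.map w).sum} := by
  refine ⟨0, ?_⟩
  rintro y ⟨p, rfl⟩
  exact wSum_nonneg hw p

lemma wDist_le_walk (hw : ∀ e ∈ G.edgeSet, 0 ≤ w e) {u v : V} (p : G.Walk u v) :
    wDist G w u v ≤ (p.edges.map w).sum :=
  csInf_le (wDist_bddBelow hw u v) ⟨p, rfl⟩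

lemma wDist_nonneg (hw : ∀ e ∈ G.edgeSet, 0 ≤ w e) {u v : V} (h : G.Reachable u v) :
    0 ≤ wDist G w u v := by
  obtain ⟨p⟩ := h
  refine le_csInf ⟨_, p, rfl⟩ ?_
  rintro y ⟨q, rfl⟩
  exact wSum_nonneg hw q

lemma wDist_self_nonpos (hw : ∀ e ∈ G.edgeSet, 0 ≤ w e) (u : V) :
    wDist G w u u ≤ 0 := by
  have := wDist_le_walk hw (SimpleGraph.Walk.nil : G.Walk u u)
  simpa using this

lemma wDist_le_edge (hw : ∀ e ∈ G.edgeSet, 0 ≤ w e) {u v : V} (h : G.Adj u v) :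
    wDist G w u v ≤ w s(u, v) := by
  have := wDist_le_walk hw (SimpleGraph.Walk.cons h SimpleGraph.Walk.nil)
  simpa using this

lemma wDist_symm (hw : ∀ e ∈ G.edgeSet, 0 ≤ w e) {u v : V} (h : G.Reachable u v) :
    wDist G w u v = wDist G w v u := by
  have key : ∀ (s t : V), G.Reachable s t → wDist G w t s ≤ wDist G w s t := by
    intro s t hst
    obtain ⟨p⟩ := hst
    refine le_csInf ⟨_, p, rfl⟩ ?_
    rintro y ⟨q, rfl⟩
    have := wDist_le_walk hw q.reverse
    simpa [List.sum_reverse] using this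
  exact le_antisymm (key v u h.symm) (key u v h)

lemma wDist_triangle (hw : ∀ e ∈ G.edgeSet, 0 ≤ w e) {u m v : V}
    (h1 : G.Reachable u m) (h2 : G.Reachable m v) :
    wDist G w u v ≤ wDist G w u m + wDist G w m v := by
  obtain ⟨p0⟩ := h1
  obtain ⟨q0⟩ := h2
  have step : ∀ y ∈ {x : ℝ | ∃ q : G.Walk m v, x = (q.edges.map w).sum},
      wDist G w u v - y ≤ wDist G w u m := by
    rintro y ⟨q, rfl⟩
    refine le_csInf ⟨_, p0, rfl⟩ ?_
    rintro z ⟨p, rfl⟩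
    have := wDist_le_walk hw (p.append q)
    rw [SimpleGraph.Walk.edges_append, List.map_append, List.sum_append] at this
    linarith
  have : wDist G w u v - wDist G w u m ≤ wDist G w m v := by
    refine le_csInf ⟨_, q0, rfl⟩ ?_
    intro y hy
    linarith [step y hy]
  linarith

end helpers

/-- Compactification of a slack vertex `x` (with cycle-neighbours `a` and `b`)
of a cycle of a positively weighted connected graph `G` whose edges lie on no
other cycle: deleting the edges `{a,x}`, `{x,b}` and joining `a`, `x`, `b` to a
new vertex by edges of weights given by the half triangle excesses yields a
graph `G'` whose shortest-path metric agrees with that of `G` on `V(G)`; in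
particular `G'` realizes the same metric on any `X ⊆ V(G)`. -/
theorem stmt_11 {V : Type*} [DecidableEq V] (G : SimpleGraph V) (hG : G.Connected)
    (w : Sym2 V → ℝ) (hw : ∀ e ∈ G.edgeSet, 0 < w e)
    (v0 : V) (p : G.Walk v0 v0) (hp : p.IsCycle) (hlen : 4 ≤ p.length)
    (huniq : ∀ (u : V) (q : G.Walk u u), q.IsCycle →
      (∃ e ∈ p.edges, e ∈ q.edges) → ∀ e, e ∈ p.edges ↔ e ∈ q.edges)
    (a x b : V) (hax : s(a, x) ∈ p.edges) (hxb : s(x, b) ∈ p.edges) (hab : a ≠ b)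
    (hslack : wDist G w a b < wDist G w a x + wDist G w x b)
    (Δa Δx Δb : ℝ)
    (hΔa : Δa = (wDist G w a x + wDist G w a b - wDist G w x b) / 2)
    (hΔx : Δx = (wDist G w a x + wDist G w x b - wDist G w a b) / 2)
    (hΔb : Δb = (wDist G w x b + wDist G w a b - wDist G w a x) / 2)
    (G' : SimpleGraph (V ⊕ Unit))
    (hG' : G' = SimpleGraph.fromEdgeSet
      ((Sym2.map (Sum.inl : V → V ⊕ Unit) '' (G.edgeSet \ {s(a, x), s(x, b)})) ∪
        {s(Sum.inl a, Sum.inr ()), s(Sum.inl x, Sum.inr ()), s(Sum.inl b, Sum.inr ())}))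
    (w2 : Sym2 (V ⊕ Unit) → ℝ)
    (hw2 : ∀ e : Sym2 (V ⊕ Unit),
      w2 e = if e = s(Sum.inl a, Sum.inr ()) then Δa
        else if e = s(Sum.inl x, Sum.inr ()) then Δx
        else if e = s(Sum.inl b, Sum.inr ()) then Δb
        else w (Sym2.map (Sum.elim id fun _ => x) e)) :
    ∀ u v : V, wDist G' w2 (Sum.inl u) (Sum.inl v) = wDist G w u v := by
  have hw0 : ∀ e ∈ G.edgeSet, 0 ≤ w e := fun e he => (hw e he).le
  have hpre := hG.preconnected
  have haxA : G.Adj a x := (G.mem_edgeSet).1 (p.edges_subset_edgeSet hax)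
  have hxbA : G.Adj x b := (G.mem_edgeSet).1 (p.edges_subset_edgeSet hxb)
  set d : V → V → ℝ := wDist G w with hd
  have hsymm : ∀ s t : V, d s t = d t s := fun s t => wDist_symm hw0 (hpre s t)
  have htri : ∀ s m t : V, d s t ≤ d s m + d m t :=
    fun s m t => wDist_triangle hw0 (hpre s m) (hpre m t)
  have hd0 : ∀ s : V, d s s ≤ 0 := fun s => wDist_self_nonpos hw0 s
  have hdnn : ∀ s t : V, 0 ≤ d s t := fun s t => wDist_nonneg hw0 (hpre s t)
  have dax : d a x ≤ w s(a, x) := wDist_le_edge hw0 haxA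
  have dxb : d x b ≤ w s(x, b) := wDist_le_edge hw0 hxbA
  have hdax : d a x = Δa + Δx := by rw [hΔa, hΔx]; ring
  have hdxb : d x b = Δx + Δb := by rw [hΔx, hΔb]; ring
  have hdab : d a b = Δa + Δb := by rw [hΔa, hΔb]; ring
  have hΔa0 : 0 ≤ Δa := by
    have h1 := htri x a b
    have h2 := hsymm x a
    rw [hΔa]; linarith
  have hΔx0 : 0 ≤ Δx := by
    have h1 := htri a x b
    rw [hΔx]; linarith
  have hΔb0 : 0 ≤ Δb := by
    have h1 := htri a b x
    have h2 := hsymm b x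
    rw [hΔb]; linarith
  have hne_ax : a ≠ x := haxA.ne
  have hne_xb : x ≠ b := hxbA.ne
  -- triple predicate
  have hpair : ∀ (c c' : V) (Dc Dc' : ℝ),
      ((c = a ∧ Dc = Δa) ∨ (c = x ∧ Dc = Δx) ∨ (c = b ∧ Dc = Δb)) →
      ((c' = a ∧ Dc' = Δa) ∨ (c' = x ∧ Dc' = Δx) ∨ (c' = b ∧ Dc' = Δb)) →
      d c c' ≤ Dc + Dc' := by
    rintro c c' Dc Dc' (⟨h1a, h1b⟩ | ⟨h1a, h1b⟩ | ⟨h1a, h1b⟩)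
        (⟨h2a, h2b⟩ | ⟨h2a, h2b⟩ | ⟨h2a, h2b⟩) <;> rw [h1a, h1b, h2a, h2b] <;>
      linarith [hd0 a, hd0 x, hd0 b, hsymm x a, hsymm b a, hsymm b x, hdax, hdxb, hdab,
        hΔa0, hΔx0, hΔb0]
  -- w2 values
  have w2a : w2 s(Sum.inl a, Sum.inr ()) = Δa := by rw [hw2]; simp
  have w2x : w2 s(Sum.inl x, Sum.inr ()) = Δx := by
    rw [hw2]
    rw [if_neg (by simp [Sym2.eq_iff]; exact fun h => hne_ax h.symm), if_pos rfl]
  have w2b : w2 s(Sum.inl b, Sum.inr ()) = Δb := by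
    rw [hw2]
    rw [if_neg (by simp [Sym2.eq_iff]; exact fun h => hab h.symm),
        if_neg (by simp [Sym2.eq_iff]; exact fun h => hne_xb h.symm), if_pos rfl]
  have w2lift : ∀ u' v' : V, w2 s(Sum.inl u', Sum.inl v') = w s(u', v') := by
    intro u' v'
    rw [hw2]
    rw [if_neg (by simp [Sym2.eq_iff]), if_neg (by simp [Sym2.eq_iff]),
        if_neg (by simp [Sym2.eq_iff])]
    simp
  -- adjacency in G'
  have adj_lift : ∀ {u' v' : V}, G.Adj u' v' → s(u', v') ≠ s(a, x) → s(u', v') ≠ s(x, b) →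
      G'.Adj (Sum.inl u') (Sum.inl v') := by
    intro u' v' hA h1 h2
    rw [hG', SimpleGraph.fromEdgeSet_adj]
    refine ⟨Or.inl ⟨s(u', v'), ⟨hA, by simp [h1, h2]⟩, by simp [Sym2.map_pair_eq]⟩,
      by simp [hA.ne]⟩
  have adj_a : G'.Adj (Sum.inl a) (Sum.inr ()) := by
    rw [hG', SimpleGraph.fromEdgeSet_adj]
    exact ⟨Or.inr (by simp), by simp⟩
  have adj_x : G'.Adj (Sum.inl x) (Sum.inr ()) := by
    rw [hG', SimpleGraph.fromEdgeSet_adj]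
    exact ⟨Or.inr (by simp), by simp⟩
  have adj_b : G'.Adj (Sum.inl b) (Sum.inr ()) := by
    rw [hG', SimpleGraph.fromEdgeSet_adj]
    exact ⟨Or.inr (by simp), by simp⟩
  -- characterization of G' adjacency
  have hadj : ∀ s t : V ⊕ Unit, G'.Adj s t →
      (∃ u' v', s = Sum.inl u' ∧ t = Sum.inl v' ∧ G.Adj u' v' ∧
        s(u', v') ≠ s(a, x) ∧ s(u', v') ≠ s(x, b)) ∨
      (∃ c Dc, ((c = a ∧ Dc = Δa) ∨ (c = x ∧ Dc = Δx) ∨ (c = b ∧ Dc = Δb)) ∧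
        w2 s(s, t) = Dc ∧
        ((s = Sum.inl c ∧ t = Sum.inr ()) ∨ (s = Sum.inr () ∧ t = Sum.inl c))) := by
    intro s t h
    rw [hG', SimpleGraph.fromEdgeSet_adj] at h
    obtain ⟨hmem, hne⟩ := h
    rcases hmem with ⟨e0, he0, heq⟩ | hmem
    · obtain ⟨he0G, he0n⟩ := he0
      simp only [Set.mem_insert_iff, Set.mem_singleton_iff, not_or] at he0n
      revert he0G he0n heq
      refine Sym2.ind (fun u' v' => ?_) e0
      intro hmapeq hmemG hnot
      rw [Sym2.map_pair_eq, Sym2.eq_iff] at hmapeq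
      left
      rcases hmapeq with ⟨h1, h2⟩ | ⟨h1, h2⟩
      · exact ⟨u', v', h1.symm, h2.symm, (G.mem_edgeSet).1 hmemG, hnot.1, hnot.2⟩
      · refine ⟨v', u', h2.symm, h1.symm, ((G.mem_edgeSet).1 hmemG).symm, ?_, ?_⟩
        · rw [Sym2.eq_swap]; exact hnot.1
        · rw [Sym2.eq_swap]; exact hnot.2
    · simp only [Set.mem_insert_iff, Set.mem_singleton_iff] at hmem
      right
      rcases hmem with h | h | h
      · refine ⟨a, Δa, Or.inl ⟨rfl, rfl⟩, by rw [h, w2a], ?_⟩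
        rw [Sym2.eq_iff] at h
        rcases h with ⟨h1, h2⟩ | ⟨h1, h2⟩
        · exact Or.inl ⟨h1, h2⟩
        · exact Or.inr ⟨h1, h2⟩
      · refine ⟨x, Δx, Or.inr (Or.inl ⟨rfl, rfl⟩), by rw [h, w2x], ?_⟩
        rw [Sym2.eq_iff] at h
        rcases h with ⟨h1, h2⟩ | ⟨h1, h2⟩
        · exact Or.inl ⟨h1, h2⟩
        · exact Or.inr ⟨h1, h2⟩
      · refine ⟨b, Δb, Or.inr (Or.inr ⟨rfl, rfl⟩), by rw [h, w2b], ?_⟩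
        rw [Sym2.eq_iff] at h
        rcases h with ⟨h1, h2⟩ | ⟨h1, h2⟩
        · exact Or.inl ⟨h1, h2⟩
        · exact Or.inr ⟨h1, h2⟩
  -- the comparison function D
  set D : V ⊕ Unit → V ⊕ Unit → ℝ := fun s t =>
    Sum.elim
      (fun u0 => Sum.elim (fun v0 => d u0 v0)
        (fun _ => min (d u0 a + Δa) (min (d u0 x + Δx) (d u0 b + Δb))) t)
      (fun _ => Sum.elim (fun v0 => min (Δa + d a v0) (min (Δx + d x v0) (Δb + d b v0)))
        (fun _ => (0 : ℝ)) t) s with hD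
  have D_ll : ∀ u0 v1 : V, D (Sum.inl u0) (Sum.inl v1) = d u0 v1 := fun _ _ => rfl
  have D_li : ∀ (u0 : V) (t0 : Unit),
      D (Sum.inl u0) (Sum.inr t0) =
        min (d u0 a + Δa) (min (d u0 x + Δx) (d u0 b + Δb)) := fun _ _ => rfl
  have D_rl : ∀ (t0 : Unit) (v1 : V),
      D (Sum.inr t0) (Sum.inl v1) =
        min (Δa + d a v1) (min (Δx + d x v1) (Δb + d b v1)) := fun _ _ => rfl
  have D_rr : ∀ t0 t1 : Unit, D (Sum.inr t0) (Sum.inr t1) = 0 := fun _ _ => rfl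
  have Lle : ∀ (z c : V) (Dc : ℝ),
      ((c = a ∧ Dc = Δa) ∨ (c = x ∧ Dc = Δx) ∨ (c = b ∧ Dc = Δb)) →
      min (d z a + Δa) (min (d z x + Δx) (d z b + Δb)) ≤ d z c + Dc := by
    rintro z c Dc (⟨rfl, rfl⟩ | ⟨rfl, rfl⟩ | ⟨rfl, rfl⟩)
    · exact min_le_left _ _
    · exact le_trans (min_le_right _ _) (min_le_left _ _)
    · exact le_trans (min_le_right _ _) (min_le_right _ _)
  have Rle : ∀ (z c : V) (Dc : ℝ),
      ((c = a ∧ Dc = Δa) ∨ (c = x ∧ Dc = Δx) ∨ (c = b ∧ Dc = Δb)) →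
      min (Δa + d a z) (min (Δx + d x z) (Δb + d b z)) ≤ Dc + d c z := by
    rintro z c Dc (⟨rfl, rfl⟩ | ⟨rfl, rfl⟩ | ⟨rfl, rfl⟩)
    · exact min_le_left _ _
    · exact le_trans (min_le_right _ _) (min_le_left _ _)
    · exact le_trans (min_le_right _ _) (min_le_right _ _)
  have Lnn : ∀ z : V, 0 ≤ min (d z a + Δa) (min (d z x + Δx) (d z b + Δb)) := by
    intro z
    exact le_min (by linarith [hdnn z a]) (le_min (by linarith [hdnn z x]) (by linarith [hdnn z b]))
  -- key edge inequality
  have hedge : ∀ (s s' t : V ⊕ Unit), G'.Adj s s' → D s t ≤ w2 s(s, s') + D s' t := by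
    intro s s' t h
    rcases hadj s s' h with ⟨u', v', rfl, rfl, hA, h1, h2⟩ | ⟨c, Dc, hc, hwv, hpos⟩
    · have hwe : w2 s(Sum.inl u', Sum.inl v') = w s(u', v') := w2lift u' v'
      have hle : d u' v' ≤ w s(u', v') := wDist_le_edge hw0 hA
      cases t with
      | inl z =>
        rw [D_ll, D_ll, hwe]
        linarith [htri u' v' z]
      | inr t0 =>
        rw [D_li, D_li, hwe]
        have h3 : w s(u', v') + min (d v' a + Δa) (min (d v' x + Δx) (d v' b + Δb)) =
            min (w s(u', v') + (d v' a + Δa))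
              (min (w s(u', v') + (d v' x + Δx)) (w s(u', v') + (d v' b + Δb))) := by
          rw [min_add_add_left, min_add_add_left]
        rw [h3]
        refine le_min ?_ (le_min ?_ ?_)
        · linarith [Lle u' a Δa (Or.inl ⟨rfl, rfl⟩), htri u' v' a]
        · linarith [Lle u' x Δx (Or.inr (Or.inl ⟨rfl, rfl⟩)), htri u' v' x]
        · linarith [Lle u' b Δb (Or.inr (Or.inr ⟨rfl, rfl⟩)), htri u' v' b]
    · have hDc0 : 0 ≤ Dc := by
        rcases hc with ⟨_, rfl⟩ | ⟨_, rfl⟩ | ⟨_, rfl⟩ <;> assumption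
      rcases hpos with ⟨rfl, rfl⟩ | ⟨rfl, rfl⟩
      · rw [hwv]
        cases t with
        | inl z =>
          rw [D_ll, D_rl]
          have h3 : Dc + min (Δa + d a z) (min (Δx + d x z) (Δb + d b z)) =
              min (Dc + (Δa + d a z)) (min (Dc + (Δx + d x z)) (Dc + (Δb + d b z))) := by
            rw [min_add_add_left, min_add_add_left]
          rw [h3]
          refine le_min ?_ (le_min ?_ ?_)
          · linarith [hpair c a Dc Δa hc (Or.inl ⟨rfl, rfl⟩), htri c a z]
          · linarith [hpair c x Dc Δx hc (Or.inr (Or.inl ⟨rfl, rfl⟩)), htri c x z]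
          · linarith [hpair c b Dc Δb hc (Or.inr (Or.inr ⟨rfl, rfl⟩)), htri c b z]
        | inr t0 =>
          rw [D_li, D_rr]
          linarith [Lle c c Dc hc, hd0 c]
      · rw [hwv]
        cases t with
        | inl z =>
          rw [D_rl, D_ll]
          exact Rle z c Dc hc
        | inr t0 =>
          rw [D_rr, D_li]
          linarith [Lnn c]
  -- every G' walk is bounded below by D
  have hwalkG' : ∀ (s t : V ⊕ Unit) (q : G'.Walk s t), D s t ≤ (q.edges.map w2).sum := by
    intro s t q
    induction q with
    | @nil s0 =>
      simp only [SimpleGraph.Walk.edges_nil, List.map_nil, List.sum_nil]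
      cases s0 with
      | inl u0 => rw [D_ll]; exact hd0 u0
      | inr t0 => rw [D_rr]
    | @cons s1 s2 t1 h q ih =>
      simp only [SimpleGraph.Walk.edges_cons, List.map_cons, List.sum_cons]
      linarith [hedge s1 s2 t1 h, ih]
  -- lifting G walks to G'
  have w2swap : ∀ s t : V ⊕ Unit, w2 s(t, s) = w2 s(s, t) := by
    intro s t; rw [Sym2.eq_swap]
  have wswap : ∀ s t : V, w s(t, s) = w s(s, t) := by
    intro s t; rw [Sym2.eq_swap]
  have hlift : ∀ (u1 v1 : V) (p1 : G.Walk u1 v1), ∃ q : G'.Walk (Sum.inl u1) (Sum.inl v1),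
      (q.edges.map w2).sum ≤ (p1.edges.map w).sum := by
    intro u1 v1 p1
    induction p1 with
    | nil => exact ⟨SimpleGraph.Walk.nil, by simp⟩
    | @cons u1 m1 v1 h p1 ih =>
      obtain ⟨q, hq⟩ := ih
      by_cases h1 : s(u1, m1) = s(a, x)
      · rw [Sym2.eq_iff] at h1
        rcases h1 with ⟨rfl, rfl⟩ | ⟨rfl, rfl⟩
        · refine ⟨SimpleGraph.Walk.cons adj_a (SimpleGraph.Walk.cons adj_x.symm q), ?_⟩
          simp only [SimpleGraph.Walk.edges_cons, List.map_cons, List.sum_cons]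
          rw [w2a, w2swap, w2x]
          linarith [hq, dax, hdax.le]
        · refine ⟨SimpleGraph.Walk.cons adj_x (SimpleGraph.Walk.cons adj_a.symm q), ?_⟩
          simp only [SimpleGraph.Walk.edges_cons, List.map_cons, List.sum_cons]
          rw [w2x, w2swap, w2a, wswap]
          linarith [hq, dax, hdax.le]
      · by_cases h2 : s(u1, m1) = s(x, b)
        · rw [Sym2.eq_iff] at h2
          rcases h2 with ⟨rfl, rfl⟩ | ⟨rfl, rfl⟩
          · refine ⟨SimpleGraph.Walk.cons adj_x (SimpleGraph.Walk.cons adj_b.symm q), ?_⟩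
            simp only [SimpleGraph.Walk.edges_cons, List.map_cons, List.sum_cons]
            rw [w2x, w2swap, w2b]
            linarith [hq, dxb, hdxb.le]
          · refine ⟨SimpleGraph.Walk.cons adj_b (SimpleGraph.Walk.cons adj_x.symm q), ?_⟩
            simp only [SimpleGraph.Walk.edges_cons, List.map_cons, List.sum_cons]
            rw [w2b, w2swap, w2x, wswap]
            linarith [hq, dxb, hdxb.le]
        · refine ⟨SimpleGraph.Walk.cons (adj_lift h h1 h2) q, ?_⟩
          simp only [SimpleGraph.Walk.edges_cons, List.map_cons, List.sum_cons]
          rw [w2lift]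
          linarith [hq]
  -- w2 is nonnegative on G' edges
  have hw20 : ∀ e ∈ G'.edgeSet, 0 ≤ w2 e := by
    intro e
    refine Sym2.ind (fun s t => ?_) e
    intro he
    rw [SimpleGraph.mem_edgeSet] at he
    rcases hadj s t he with ⟨u', v', rfl, rfl, hA, _, _⟩ | ⟨c, Dc, hc, hwv, _⟩
    · rw [w2lift]
      exact hw0 _ ((G.mem_edgeSet).2 hA)
    · rw [hwv]
      rcases hc with ⟨_, rfl⟩ | ⟨_, rfl⟩ | ⟨_, rfl⟩ <;> assumption
  -- conclusion
  intro u v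
  obtain ⟨p0⟩ := hpre u v
  obtain ⟨q0, hq0⟩ := hlift u v p0
  apply le_antisymm
  · rw [hd]
    refine le_csInf ⟨_, p0, rfl⟩ ?_
    rintro y ⟨p1, rfl⟩
    obtain ⟨q1, hq1⟩ := hlift u v p1
    exact le_trans (csInf_le (wDist_bddBelow hw20 _ _) ⟨q1, rfl⟩) hq1
  · show d u v ≤ wDist G' w2 (Sum.inl u) (Sum.inl v)
    refine le_csInf ⟨_, q0, rfl⟩ ?_
    rintro y ⟨q1, rfl⟩
    have := hwalkG' (Sum.inl u) (Sum.inl v) q1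
    rw [D_ll] at this
    exact this
end

section
/- Let C be a cycle on vertices v_1,...,v_m (m ≥ 4) with positive edge weights that is a realization of a metric d on {v_1,...,v_m} satisfying the no-slack condition d(v_{i-1},v_i) + d(v_i,v_{i+1}) = d(v_{i-1},v_{i+1}) for all i. If C' is another cycle on the same vertex set with positive edge weights realizing d and satisfying the no-slack condition, then C' has the same edge set (up to the cyclic order and its reversal) and the same edge weights as C. -/
noncomputable def pS (m : ℕ) (w : ZMod m → ℝ) (i : ZMod m) (t : ℕ) : ℝ :=
  ∑ k ∈ Finset.range t, w (i + (k : ZMod m))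

lemma pS_add (m : ℕ) (w : ZMod m → ℝ) (i : ZMod m) (s t : ℕ) :
    pS m w i (s + t) = pS m w i s + pS m w (i + (s : ZMod m)) t := by
  unfold pS
  rw [Finset.sum_range_add]
  congr 1
  refine Finset.sum_congr rfl fun k _ => ?_
  congr 1
  push_cast
  ring

lemma pS_one (m : ℕ) (w : ZMod m → ℝ) (i : ZMod m) : pS m w i 1 = w i := by
  simp [pS]

lemma pS_pos {m : ℕ} {w : ZMod m → ℝ} (hw : ∀ e, 0 < w e) (i : ZMod m) {t : ℕ}
    (ht : 0 < t) : 0 < pS m w i t :=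
  Finset.sum_pos (fun k _ => hw _) (Finset.nonempty_range_iff.mpr (by omega))

lemma pS_total {m : ℕ} [NeZero m] (w : ZMod m → ℝ) (i : ZMod m) :
    pS m w i m = ∑ e, w e := by
  unfold pS
  refine Finset.sum_nbij' (fun k => i + (k : ZMod m)) (fun e => (e - i).val)
    (fun a _ => Finset.mem_univ _) (fun a _ => Finset.mem_range.mpr (ZMod.val_lt _))
    (fun a ha => ?_) (fun a _ => ?_) (fun a _ => rfl)
  · show (i + (a : ZMod m) - i).val = a
    rw [add_sub_cancel_left, ZMod.val_cast_of_lt (Finset.mem_range.mp ha)]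
  · show i + (((a - i).val : ℕ) : ZMod m) = a
    rw [ZMod.natCast_rightInverse (a - i)]; ring

lemma cycleDist_comm (m : ℕ) (w : ZMod m → ℝ) (i j : ZMod m) :
    cycleDist m w i j = cycleDist m w j i := min_comm _ _

lemma cycleDist_apart {m : ℕ} [NeZero m] (w : ZMod m → ℝ) (i : ZMod m) {t : ℕ}
    (ht0 : 0 < t) (htm : t < m) :
    cycleDist m w i (i + (t : ZMod m))
      = min (pS m w i t) ((∑ e, w e) - pS m w i t) := by
  have hv : ((t : ZMod m)).val = t := ZMod.val_cast_of_lt htm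
  have h1 : arcSum m w i (i + (t : ZMod m)) = pS m w i t := by
    unfold arcSum pS
    rw [add_sub_cancel_left, hv]
  have hmt : ((m - t : ℕ) : ZMod m) = -(t : ZMod m) := by
    have h0 : ((m - t : ℕ) : ZMod m) + (t : ZMod m) = 0 := by
      rw [← Nat.cast_add, Nat.sub_add_cancel htm.le, ZMod.natCast_self]
    exact eq_neg_of_add_eq_zero_left h0
  have hv2 : (i - (i + (t : ZMod m))).val = m - t := by
    have h : i - (i + (t : ZMod m)) = ((m - t : ℕ) : ZMod m) := by rw [hmt]; ring
    rw [h, ZMod.val_cast_of_lt (by omega)]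
  have h2 : arcSum m w (i + (t : ZMod m)) i = pS m w (i + (t : ZMod m)) (m - t) := by
    unfold arcSum pS
    rw [hv2]
  have h3 : pS m w i t + pS m w (i + (t : ZMod m)) (m - t) = ∑ e, w e := by
    rw [← pS_add, Nat.add_sub_cancel' htm.le, pS_total]
  unfold cycleDist
  rw [h1, h2]
  congr 1
  linarith

lemma cycleDist_edge {m : ℕ} [NeZero m] (hm : 2 ≤ m) (w : ZMod m → ℝ)
    (key : ∀ e, 2 * w e < ∑ e, w e) (i : ZMod m) :
    cycleDist m w i (i + 1) = w i := by
  have h := cycleDist_apart w i (t := 1) one_pos (by omega)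
  rw [Nat.cast_one, pS_one] at h
  rw [h]
  exact min_eq_left (by linarith [key i])

lemma castm1 {m : ℕ} [NeZero m] : ((m - 1 : ℕ) : ZMod m) = -1 := by
  have h1 : ((m - 1 + 1 : ℕ) : ZMod m) = 0 := by
    rw [Nat.sub_add_cancel (NeZero.one_le), ZMod.natCast_self]
  rw [Nat.cast_add, Nat.cast_one] at h1
  exact eq_neg_of_add_eq_zero_left h1

lemma keylemma {m : ℕ} [NeZero m] (hm : 4 ≤ m) (w : ZMod m → ℝ) (hw : ∀ e, 0 < w e)
    (hns : ∀ i : ZMod m,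
      cycleDist m w (i - 1) i + cycleDist m w i (i + 1) = cycleDist m w (i - 1) (i + 1)) :
    ∀ e, 2 * w e < ∑ x, w x := by
  intro i
  by_contra hcon
  push_neg at hcon
  set L := ∑ x, w x with hL
  have hns' := hns (i + 1)
  rw [add_sub_cancel_right] at hns'
  have c1 : cycleDist m w i (i + 1) = min (w i) (L - w i) := by
    have h := cycleDist_apart w i (t := 1) one_pos (by omega)
    rwa [Nat.cast_one, pS_one] at h
  have c2 : cycleDist m w (i + 1) (i + 1 + 1) = min (w (i + 1)) (L - w (i + 1)) := by
    have h := cycleDist_apart w (i + 1) (t := 1) one_pos (by omega)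
    rwa [Nat.cast_one, pS_one] at h
  have hp2 : pS m w i 2 = w i + w (i + 1) := by
    have h := pS_add m w i 1 1
    rw [pS_one, Nat.cast_one, pS_one] at h
    exact h
  have c3 : cycleDist m w i (i + 1 + 1) = min (w i + w (i + 1)) (L - (w i + w (i + 1))) := by
    have h := cycleDist_apart w i (t := 2) (by omega) (by omega)
    rw [hp2] at h
    rwa [show i + ((2 : ℕ) : ZMod m) = i + 1 + 1 by push_cast; ring] at h
  have hsum : w i + w (i + 1) < L := by
    have h := pS_add m w i 2 (m - 2)
    rw [show 2 + (m - 2) = m by omega, pS_total] at h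
    have hpos := pS_pos hw (i + ((2 : ℕ) : ZMod m)) (t := m - 2) (by omega)
    rw [hp2] at h
    rw [hL]; linarith
  rw [c1, c2, c3] at hns'
  have e1 : min (w i) (L - w i) = L - w i := min_eq_right (by linarith)
  have e2 : min (w (i + 1)) (L - w (i + 1)) = w (i + 1) := min_eq_left (by linarith [hw i, hw (i + 1)])
  have e3 : min (w i + w (i + 1)) (L - (w i + w (i + 1))) = L - (w i + w (i + 1)) :=
    min_eq_right (by linarith [hw (i + 1)])
  rw [e1, e2, e3] at hns'
  have := hw (i + 1)
  linarith

lemma adj_forward {m : ℕ} [NeZero m] (hm : 4 ≤ m) (w : ZMod m → ℝ) (hw : ∀ e, 0 < w e)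
    (key : ∀ e, 2 * w e < ∑ x, w x) (i k : ZMod m) (hk1 : k ≠ i) (hk2 : k ≠ i + 1) :
    cycleDist m w i (i + 1) < cycleDist m w i k + cycleDist m w k (i + 1) := by
  set L := ∑ x, w x with hL
  set t := (k - (i + 1)).val with htdef
  have hk : k = (i + 1) + (t : ZMod m) := by
    rw [htdef, ZMod.natCast_rightInverse (k - (i + 1))]; ring
  have htlt : t < m := ZMod.val_lt _
  have ht0 : 0 < t := by
    rcases Nat.eq_zero_or_pos t with h | h
    · exfalso; apply hk2; rw [hk, h]; simp
    · exact h
  have htm2 : t ≤ m - 2 := by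
    by_contra hc
    have : t = m - 1 := by omega
    apply hk1
    rw [hk, this, castm1]; ring
  have c_ik : cycleDist m w i k = min (pS m w i (t + 1)) (L - pS m w i (t + 1)) := by
    have h := cycleDist_apart w i (t := t + 1) (by omega) (by omega)
    rwa [show i + ((t + 1 : ℕ) : ZMod m) = k by rw [hk]; push_cast; ring] at h
  have c_k1 : cycleDist m w k (i + 1) = min (pS m w (i + 1) t) (L - pS m w (i + 1) t) := by
    rw [cycleDist_comm]
    have h := cycleDist_apart w (i + 1) ht0 htlt
    rwa [← hk] at h
  have hsplit : pS m w i (t + 1) = w i + pS m w (i + 1) t := by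
    have h := pS_add m w i 1 t
    rw [pS_one, Nat.cast_one] at h
    rw [show t + 1 = 1 + t by omega, h]
  have hBpos : 0 < pS m w (i + 1) t := pS_pos hw _ ht0
  have hlt : pS m w i (t + 1) < L := by
    have h := pS_add m w i (t + 1) (m - (t + 1))
    rw [show t + 1 + (m - (t + 1)) = m by omega, pS_total] at h
    have hpos := pS_pos hw (i + ((t + 1 : ℕ) : ZMod m)) (t := m - (t + 1)) (by omega)
    rw [hL]; linarith
  have hedge : cycleDist m w i (i + 1) = w i := cycleDist_edge (by omega) w key i
  rw [hedge, c_ik, c_k1, hsplit]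
  set B := pS m w (i + 1) t with hB
  rw [hsplit] at hlt
  rcases min_cases (w i + B) (L - (w i + B)) with ⟨h1, _⟩ | ⟨h1, _⟩ <;>
    rcases min_cases B (L - B) with ⟨h2, _⟩ | ⟨h2, _⟩ <;> rw [h1, h2] <;>
    linarith [hw i, key i]

lemma adj_rev {m : ℕ} [NeZero m] (hm : 4 ≤ m) (w : ZMod m → ℝ) (hw : ∀ e, 0 < w e)
    (key : ∀ e, 2 * w e < ∑ x, w x) (a b : ZMod m) (hab : a ≠ b)
    (hb1 : b ≠ a + 1) (ha1 : a ≠ b + 1) :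
    ∃ k, k ≠ a ∧ k ≠ b ∧ cycleDist m w a k + cycleDist m w k b ≤ cycleDist m w a b := by
  haveI : Fact (1 < m) := ⟨by omega⟩
  set L := ∑ x, w x with hL
  set t := (b - a).val with htdef
  have hb : b = a + (t : ZMod m) := by
    rw [htdef, ZMod.natCast_rightInverse (b - a)]; ring
  have htlt : t < m := ZMod.val_lt _
  have ht0 : 0 < t := by
    rcases Nat.eq_zero_or_pos t with h | h
    · exfalso; apply hab; rw [hb, h]; simp
    · exact h
  have ht1 : t ≠ 1 := by
    intro h
    apply hb1; rw [hb, h, Nat.cast_one]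
  have htm1 : t ≠ m - 1 := by
    intro h
    apply ha1; rw [hb, h, castm1]; ring
  have honz : (1 : ZMod m) ≠ 0 := by
    intro h
    have h1 := ZMod.val_one m
    rw [h] at h1
    simp at h1
  have hcab : cycleDist m w a b = min (pS m w a t) (L - pS m w a t) := by
    have h := cycleDist_apart w a ht0 htlt
    rwa [← hb] at h
  set S := pS m w a t with hS
  rcases le_or_gt S (L - S) with hcase | hcase
  · -- short arc is forward : take k = a + 1
    refine ⟨a + 1, ?_, ?_, ?_⟩
    · intro h
      exact honz (by simpa using h)
    · intro h
      exact hb1 h.symm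
    · have d1 : cycleDist m w a (a + 1) = min (w a) (L - w a) := by
        have h := cycleDist_apart w a (t := 1) one_pos (by omega)
        rwa [Nat.cast_one, pS_one] at h
      have hsplit : S = w a + pS m w (a + 1) (t - 1) := by
        have h := pS_add m w a 1 (t - 1)
        rw [pS_one, Nat.cast_one, show 1 + (t - 1) = t by omega] at h
        rw [hS, h]
      have d2 : cycleDist m w (a + 1) b
          = min (pS m w (a + 1) (t - 1)) (L - pS m w (a + 1) (t - 1)) := by
        have h := cycleDist_apart w (a + 1) (t := t - 1) (by omega) (by omega)
        rwa [show a + 1 + ((t - 1 : ℕ) : ZMod m) = b by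
          rw [hb, show (t : ℕ) = (t - 1) + 1 by omega]; push_cast; ring] at h
      rw [d1, d2, hcab, min_eq_left hcase]
      calc min (w a) (L - w a) + min (pS m w (a + 1) (t - 1)) (L - pS m w (a + 1) (t - 1))
          ≤ w a + pS m w (a + 1) (t - 1) := add_le_add (min_le_left _ _) (min_le_left _ _)
        _ = S := hsplit.symm
  · -- short arc is backward : take k = a - 1
    refine ⟨a - 1, ?_, ?_, ?_⟩
    · intro h
      exact honz (sub_eq_self.mp h)
    · intro h
      exact ha1 (by rw [← h]; ring)
    · have d1 : cycleDist m w a (a - 1) ≤ w (a - 1) := by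
        rw [cycleDist_comm]
        have h := cycleDist_apart w (a - 1) (t := 1) one_pos (by omega)
        rw [Nat.cast_one, pS_one, sub_add_cancel] at h
        rw [h]
        exact min_le_left _ _
      have harc : pS m w b (m - t) = L - S := by
        have h := pS_add m w a t (m - t)
        rw [show t + (m - t) = m by omega, pS_total, ← hb] at h
        rw [hL]; linarith
      have hba : b + ((m - t - 1 : ℕ) : ZMod m) = a - 1 := by
        rw [hb, show ((m - t - 1 : ℕ) : ZMod m) = ((m - 1 : ℕ) : ZMod m) - (t : ZMod m) by
          rw [show (m - 1 : ℕ) = (m - t - 1) + t by omega]; push_cast; ring, castm1]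
        ring
      have hsplit : pS m w b (m - t - 1) = (L - S) - w (a - 1) := by
        have h := pS_add m w b (m - t - 1) 1
        rw [pS_one, show m - t - 1 + 1 = m - t by omega, hba, harc] at h
        linarith
      have d2 : cycleDist m w (a - 1) b ≤ (L - S) - w (a - 1) := by
        rw [cycleDist_comm]
        have h := cycleDist_apart w b (t := m - t - 1) (by omega) (by omega)
        rw [hba] at h
        rw [h, hsplit]
        exact min_le_left _ _
      rw [hcab, min_eq_right hcase.le]
      linarith

/-- Uniqueness of the no-slack cycle realization: if two positively weighted
cycles on the same vertex set `ZMod m` (the second visiting the vertices in the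
order `σ 0, σ 1, …`) both realize the metric `d` and both satisfy the no-slack
condition, then they have the same edges and weights, up to a rotation of the
cyclic order or a rotation composed with a reversal. -/
theorem stmt_19 (m : ℕ) (hm : 4 ≤ m) (w w' : ZMod m → ℝ)
    (hw : ∀ e, 0 < w e) (hw' : ∀ e, 0 < w' e)
    (σ : Equiv.Perm (ZMod m))
    (d : ZMod m → ZMod m → ℝ)
    (hd : ∀ i j, d i j = cycleDist m w i j)
    (hd' : ∀ i j, d (σ i) (σ j) = cycleDist m w' i j)
    (hnoslack : ∀ i : ZMod m, d (i - 1) i + d i (i + 1) = d (i - 1) (i + 1))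
    (hnoslack' : ∀ i : ZMod m,
      d (σ (i - 1)) (σ i) + d (σ i) (σ (i + 1)) = d (σ (i - 1)) (σ (i + 1))) :
    ∃ k : ZMod m,
      (∀ i : ZMod m, σ i = i + k ∧ w' i = w (i + k)) ∨
      (∀ i : ZMod m, σ i = k - i ∧ w' i = w (k - i - 1)) := by
  haveI : NeZero m := ⟨by omega⟩
  haveI : Fact (1 < m) := ⟨by omega⟩
  have honz : (1 : ZMod m) ≠ 0 := by
    intro h
    have h1 := ZMod.val_one m
    rw [h] at h1
    simp at h1
  have h2nz : (1 : ZMod m) + 1 ≠ 0 := by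
    intro h
    have h2 : ((2 : ℕ) : ZMod m) = 0 := by push_cast; linear_combination h
    rw [ZMod.natCast_eq_zero_iff] at h2
    have := Nat.le_of_dvd (by norm_num) h2
    omega
  have hnsw : ∀ i : ZMod m,
      cycleDist m w (i - 1) i + cycleDist m w i (i + 1) = cycleDist m w (i - 1) (i + 1) := by
    intro i
    rw [← hd, ← hd, ← hd]
    exact hnoslack i
  have hnsw' : ∀ i : ZMod m,
      cycleDist m w' (i - 1) i + cycleDist m w' i (i + 1) = cycleDist m w' (i - 1) (i + 1) := by
    intro i
    rw [← hd', ← hd', ← hd']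
    exact hnoslack' i
  have key : ∀ e, 2 * w e < ∑ x, w x := keylemma hm w hw hnsw
  have key' : ∀ e, 2 * w' e < ∑ x, w' x := keylemma hm w' hw' hnsw'
  -- the step relation
  have hstep : ∀ i : ZMod m, σ (i + 1) = σ i + 1 ∨ σ i = σ (i + 1) + 1 := by
    intro i
    by_contra hcon
    push_neg at hcon
    obtain ⟨h1, h2⟩ := hcon
    have hab : σ i ≠ σ (i + 1) := by
      intro h
      have := σ.injective h
      exact honz (left_eq_add.mp this)
    obtain ⟨k', hk'a, hk'b, hk'le⟩ :=
      adj_rev hm w hw key (σ i) (σ (i + 1)) hab h1 h2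
    set k := σ.symm k' with hkdef
    have hk'' : k' = σ k := (σ.apply_symm_apply k').symm
    have hki : k ≠ i := fun h => hk'a (by rw [hk'', h])
    have hki1 : k ≠ i + 1 := fun h => hk'b (by rw [hk'', h])
    have hlt := adj_forward hm w' hw' key' i k hki hki1
    rw [← hd' i (i + 1), ← hd' i k, ← hd' k (i + 1), hd, hd, hd] at hlt
    rw [hk''] at hk'le
    linarith
  -- the step direction is constant
  have hQstep : ∀ i : ZMod m, (σ (i + 1) = σ i + 1) ↔ (σ (i + 1 + 1) = σ (i + 1) + 1) := by
    intro i
    constructor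
    · intro hQ
      rcases hstep (i + 1) with h | h
      · exact h
      · exfalso
        have hs : σ (i + 1 + 1) = σ i := by
          have : σ (i + 1) = σ (i + 1 + 1) + 1 := h
          rw [hQ] at this
          exact (add_left_injective 1 this).symm
        have := σ.injective hs
        exact h2nz (by linear_combination this)
    · intro hQ
      rcases hstep i with h | h
      · exact h
      · exfalso
        have hs : σ i = σ (i + 1 + 1) := by rw [hQ, h]
        have := σ.injective hs
        exact h2nz (by linear_combination - this)
  have hQnat : ∀ n : ℕ,
      (σ ((n : ZMod m) + 1) = σ (n : ZMod m) + 1) ↔ (σ (0 + 1) = σ 0 + 1) := by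
    intro n
    induction n with
    | zero => simp
    | succ n ih =>
      rw [← ih, Nat.cast_add, Nat.cast_one]
      exact (hQstep (n : ZMod m)).symm
  have hcastval : ∀ i : ZMod m, ((i.val : ℕ) : ZMod m) = i := fun i =>
    ZMod.natCast_rightInverse i
  rcases Classical.em (σ (0 + 1) = σ 0 + 1) with h0 | h0
  · -- rotation case
    have hQ : ∀ i : ZMod m, σ (i + 1) = σ i + 1 := by
      intro i
      rw [← hcastval i]
      exact (hQnat i.val).mpr h0
    have hrot : ∀ n : ℕ, σ (n : ZMod m) = (n : ZMod m) + σ 0 := by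
      intro n
      induction n with
      | zero => simp
      | succ n ih =>
        rw [Nat.cast_add, Nat.cast_one, hQ, ih]
        ring
    have hσ : ∀ i : ZMod m, σ i = i + σ 0 := by
      intro i
      rw [← hcastval i]
      exact hrot i.val
    refine ⟨σ 0, Or.inl fun i => ⟨hσ i, ?_⟩⟩
    calc w' i = cycleDist m w' i (i + 1) := (cycleDist_edge (by omega) w' key' i).symm
      _ = d (σ i) (σ (i + 1)) := (hd' i (i + 1)).symm
      _ = cycleDist m w (σ i) (σ (i + 1)) := hd _ _
      _ = w (i + σ 0) := by
        rw [hσ i, hσ (i + 1), show i + 1 + σ 0 = (i + σ 0) + 1 by ring]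
        exact cycleDist_edge (by omega) w key (i + σ 0)
  · -- reflection case
    have hQ : ∀ i : ZMod m, σ (i + 1) = σ i - 1 := by
      intro i
      have hne : ¬(σ (i + 1) = σ i + 1) := by
        intro h
        apply h0
        apply (hQnat i.val).mp
        rw [hcastval i]
        exact h
      rcases hstep i with h | h
      · exact absurd h hne
      · rw [h]; ring
    have hrot : ∀ n : ℕ, σ (n : ZMod m) = σ 0 - (n : ZMod m) := by
      intro n
      induction n with
      | zero => simp
      | succ n ih =>
        rw [Nat.cast_add, Nat.cast_one, hQ, ih]
        ring
    have hσ : ∀ i : ZMod m, σ i = σ 0 - i := by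
      intro i
      rw [← hcastval i]
      exact hrot i.val
    refine ⟨σ 0, Or.inr fun i => ⟨hσ i, ?_⟩⟩
    calc w' i = cycleDist m w' i (i + 1) := (cycleDist_edge (by omega) w' key' i).symm
      _ = d (σ i) (σ (i + 1)) := (hd' i (i + 1)).symm
      _ = cycleDist m w (σ i) (σ (i + 1)) := hd _ _
      _ = w (σ 0 - i - 1) := by
        rw [hσ i, hσ (i + 1), show σ 0 - (i + 1) = σ 0 - i - 1 by ring, cycleDist_comm]
        have h := cycleDist_edge (by omega) w key (σ 0 - i - 1)
        rwa [show (σ 0 - i - 1) + 1 = σ 0 - i by ring] at h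
end
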